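/- Let B ⊆ ℕ^m be a positive affine semigroup such that C(B) is generated by linearly independent elements e_1,…,e_d ∈ B, and let A be the submonoid of B generated by e_1,…,e_d. Let g be a coset of G(A) in G(B) with B ∩ g ≠ ∅, and for v ∈ B_A ∩ g write v = Σ_{k=1}^d λ_k^v e_k with λ_k^v ∈ ℚ. Then h := Σ_{k=1}^d (min{λ_k^v : v ∈ B_A ∩ g}) e_k lies in G(B), and v − h ∈ A for every v ∈ B_A ∩ g; consequently b − h ∈ A for every b ∈ B ∩ g. -/

import Mathlib

open scoped BigOperators

/-- The coordinatewise cast `ℕ^m → ℤ^m`. -/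
def ntz {m : ℕ} (x : Fin m → ℕ) : Fin m → ℤ := fun i => (x i : ℤ)

/-- The coordinatewise cast `ℕ^m → ℚ^m`. -/
def ntq {m : ℕ} (x : Fin m → ℕ) : Fin m → ℚ := fun i => (x i : ℚ)

/-- `G(S)`: the subgroup of `ℤ^m` generated by an affine semigroup `S ⊆ ℕ^m`. -/
def grp {m : ℕ} (S : AddSubmonoid (Fin m → ℕ)) : AddSubgroup (Fin m → ℤ) :=
  AddSubgroup.closure (ntz '' (S : Set (Fin m → ℕ)))

/-- `C(S)`: the cone in `ℚ^m` generated by `S`, i.e. all nonnegative rational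
linear combinations of elements of `S`. -/
def cone {m : ℕ} (S : AddSubmonoid (Fin m → ℕ)) : Set (Fin m → ℚ) :=
  {x | ∃ (n : ℕ) (c : Fin n → ℚ) (v : Fin n → Fin m → ℕ),
    (∀ i, 0 ≤ c i) ∧ (∀ i, v i ∈ S) ∧ x = ∑ i, c i • ntq (v i)}

/-- `B_A := {x ∈ B : x ∉ B + (A \ {0})}`. -/
def BA {m : ℕ} (A B : AddSubmonoid (Fin m → ℕ)) : Set (Fin m → ℕ) :=
  {x | x ∈ B ∧ ¬ ∃ b ∈ B, ∃ a ∈ A, a ≠ 0 ∧ x = b + a}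

/-!
Two elements of `B` in the same coset of `G(A) = ℤe₁ + ⋯ + ℤe_d` have coordinate vectors
differing by an integer vector, because coordinates with respect to the `e_k` are unique.
Hence for `v ∈ B_A ∩ g` the vector `λ^v - μ` has natural-number entries, so for any fixed
`v₀ ∈ B_A ∩ g` the point `h = v₀ - Σ (λ_k^{v₀} - μ_k) e_k` lies in `G(B)` and `v - h ∈ A`.
Finally every `b ∈ B ∩ g` is `v + a` with `v ∈ B_A ∩ g` and `a ∈ A`: peel off nonzero
elements of `A` from `b`, which strictly lowers its coordinate sum.
-/

section Casts

variable {m d : ℕ}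

lemma ntz_add (x y : Fin m → ℕ) : ntz (x + y) = ntz x + ntz y := by
  funext i
  simp [ntz]

lemma ntz_sum_nsmul (e : Fin d → Fin m → ℕ) (n : Fin d → ℕ) :
    ntz (∑ k, n k • e k) = ∑ k, n k • ntz (e k) := by
  funext i
  simp [ntz]

lemma ntq_sum_nsmul (e : Fin d → Fin m → ℕ) (n : Fin d → ℕ) :
    ntq (∑ k, n k • e k) = ∑ k, (n k : ℚ) • ntq (e k) := by
  funext i
  simp [ntq]

lemma intCast_comp_injective :
    Function.Injective (fun (x : Fin m → ℤ) i => (x i : ℚ)) :=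
  Int.cast_injective.comp_left

end Casts

section Lattice

variable {m d : ℕ}

lemma ntz_mem_grp {S : AddSubmonoid (Fin m → ℕ)} {x : Fin m → ℕ} (hx : x ∈ S) :
    ntz x ∈ grp S :=
  AddSubgroup.subset_closure ⟨x, hx, rfl⟩

lemma mk_ntz_add_of_mem {A : AddSubmonoid (Fin m → ℕ)} (x : Fin m → ℕ) {a : Fin m → ℕ}
    (ha : a ∈ A) :
    (QuotientAddGroup.mk (ntz (x + a)) : (Fin m → ℤ) ⧸ grp A) = QuotientAddGroup.mk (ntz x) := by
  rw [ntz_add, QuotientAddGroup.mk_add, (QuotientAddGroup.eq_zero_iff _).mpr (ntz_mem_grp ha),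
    add_zero]

lemma exists_eq_sum_zsmul_of_mem_grp_closure (e : Fin d → Fin m → ℕ) {x : Fin m → ℤ}
    (hx : x ∈ grp (AddSubmonoid.closure (Set.range e))) :
    ∃ c : Fin d → ℤ, x = ∑ k, c k • ntz (e k) := by
  refine AddSubgroup.mem_closure_range_iff_of_fintype.mp ((AddSubgroup.closure_le _).mpr ?_ hx)
  rintro _ ⟨a, ha, rfl⟩
  obtain ⟨n, rfl⟩ := AddSubmonoid.mem_closure_range_iff_of_fintype.mp ha
  rw [ntz_sum_nsmul]
  exact sum_mem fun k _ => nsmul_mem (AddSubgroup.subset_closure (Set.mem_range_self k)) _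

lemma exists_int_eq_coeff_of_mem_grp_closure {e : Fin d → Fin m → ℕ}
    (hli : LinearIndependent ℚ (fun k => ntq (e k))) {x : Fin m → ℤ}
    (hx : x ∈ grp (AddSubmonoid.closure (Set.range e))) {f : Fin d → ℚ}
    (hf : (fun i => (x i : ℚ)) = ∑ k, f k • ntq (e k)) (k : Fin d) :
    ∃ z : ℤ, f k = z := by
  obtain ⟨c, rfl⟩ := exists_eq_sum_zsmul_of_mem_grp_closure e hx
  refine ⟨c k, Fintype.linearIndependent_iffₛ.mp hli f (fun k => c k) ?_ k⟩
  rw [← hf]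
  funext i
  simp [ntz, ntq]

end Lattice

lemma exists_mem_BA_add_mem {m : ℕ} {A B : AddSubmonoid (Fin m → ℕ)} {b : Fin m → ℕ}
    (hb : b ∈ B) : ∃ x ∈ BA A B, ∃ a ∈ A, b = x + a := by
  induction hs : ∑ i, b i using Nat.strong_induction_on generalizing b with
  | _ s ih =>
  by_cases hbA : b ∈ BA A B
  · exact ⟨b, hbA, 0, A.zero_mem, (add_zero b).symm⟩
  obtain ⟨b', hb', a, ha, ha0, rfl⟩ : ∃ b' ∈ B, ∃ a ∈ A, a ≠ 0 ∧ b = b' + a := by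
    by_contra h
    exact hbA ⟨hb, h⟩
  have hpos : 0 < ∑ i, a i := Nat.pos_of_ne_zero fun h =>
    ha0 (funext fun i => Finset.sum_eq_zero_iff.mp h i (Finset.mem_univ i))
  have hlt : ∑ i, b' i < s := by
    rw [← hs, Pi.add_def, Finset.sum_add_distrib]
    omega
  obtain ⟨x, hx, a', ha', rfl⟩ := ih _ hlt hb' rfl
  exact ⟨x, hx, a' + a, A.add_mem ha' ha, add_assoc _ _ _⟩

section Coordinates

variable {m d : ℕ} {B : AddSubmonoid (Fin m → ℕ)} {e : Fin d → Fin m → ℕ}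
  {lam : (Fin m → ℕ) → Fin d → ℚ}

lemma exists_int_eq_lam_sub_of_mk_eq (hli : LinearIndependent ℚ (fun k => ntq (e k)))
    (hlam : ∀ v ∈ B, ntq v = ∑ k, lam v k • ntq (e k)) {v w : Fin m → ℕ} (hv : v ∈ B)
    (hw : w ∈ B)
    (hvw : (QuotientAddGroup.mk (ntz w) : (Fin m → ℤ) ⧸ grp (AddSubmonoid.closure (Set.range e)))
      = QuotientAddGroup.mk (ntz v)) (k : Fin d) :
    ∃ z : ℤ, lam v k - lam w k = z := by
  refine exists_int_eq_coeff_of_mem_grp_closure hli (QuotientAddGroup.eq.mp hvw)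
    (f := fun k => lam v k - lam w k) ?_ k
  simp only [sub_smul, Finset.sum_sub_distrib, ← hlam v hv, ← hlam w hw]
  funext i
  simp [ntz, ntq]
  ring

lemma exists_nat_eq_lam_sub_of_isLeast (hli : LinearIndependent ℚ (fun k => ntq (e k)))
    (hlam : ∀ v ∈ B, ntq v = ∑ k, lam v k • ntq (e k))
    {g : (Fin m → ℤ) ⧸ grp (AddSubmonoid.closure (Set.range e))} {μ : Fin d → ℚ}
    (hmin : ∀ k, IsLeast {q : ℚ | ∃ v ∈ BA (AddSubmonoid.closure (Set.range e)) B,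
      (QuotientAddGroup.mk (ntz v) : (Fin m → ℤ) ⧸ _) = g ∧ q = lam v k} (μ k))
    {v : Fin m → ℕ} (hv : v ∈ BA (AddSubmonoid.closure (Set.range e)) B)
    (hvg : (QuotientAddGroup.mk (ntz v) : (Fin m → ℤ) ⧸ _) = g) :
    ∃ p : Fin d → ℕ, ∀ k, (p k : ℚ) = lam v k - μ k := by
  have (k : Fin d) : ∃ n : ℕ, (n : ℚ) = lam v k - μ k := by
    obtain ⟨w, hw, hwg, hμ⟩ := (hmin k).1
    obtain ⟨z, hz⟩ := exists_int_eq_lam_sub_of_mk_eq hli hlam hv.1 hw.1 (hwg.trans hvg.symm) k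
    have hle : lam w k ≤ lam v k := hμ ▸ (hmin k).2 ⟨v, hv, hvg, rfl⟩
    rw [hμ]
    have hz0 : (0 : ℚ) ≤ z := hz ▸ sub_nonneg.mpr hle
    lift z to ℕ using by exact_mod_cast hz0
    exact ⟨z, by exact_mod_cast hz.symm⟩
  exact Classical.skolem.mp this

lemma cast_ntz_sub_ntz_sum_nsmul {v : Fin m → ℕ} {c μ : Fin d → ℚ} {p : Fin d → ℕ}
    (hv : ntq v = ∑ k, c k • ntq (e k)) (hp : ∀ k, (p k : ℚ) = c k - μ k) :
    (fun i => ((ntz v - ntz (∑ k, p k • e k)) i : ℚ)) = ∑ k, μ k • ntq (e k) := by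
  have hμ (k : Fin d) : μ k = c k - p k := by rw [hp k, sub_sub_cancel]
  simp only [hμ, sub_smul, Finset.sum_sub_distrib, ← hv, ← ntq_sum_nsmul]
  funext i
  simp [ntz, ntq]

end Coordinates

theorem stmt10_general {m d : ℕ} (B : AddSubmonoid (Fin m → ℕ))
    (e : Fin d → Fin m → ℕ) (he : ∀ k, e k ∈ B)
    (hli : LinearIndependent ℚ (fun k => ntq (e k)))
    (A : AddSubmonoid (Fin m → ℕ)) (hA : A = AddSubmonoid.closure (Set.range e))
    (g : (Fin m → ℤ) ⧸ grp A)
    (hg : ∃ b ∈ B, (QuotientAddGroup.mk (ntz b) : (Fin m → ℤ) ⧸ grp A) = g)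
    (lam : (Fin m → ℕ) → Fin d → ℚ)
    (hlam : ∀ v ∈ B, ntq v = ∑ k, lam v k • ntq (e k))
    (μ : Fin d → ℚ)
    (hmin : ∀ k, IsLeast {q : ℚ | ∃ v ∈ BA A B,
      (QuotientAddGroup.mk (ntz v) : (Fin m → ℤ) ⧸ grp A) = g ∧ q = lam v k} (μ k)) :
    ∃ h : Fin m → ℤ, h ∈ grp B ∧
      (fun i => (h i : ℚ)) = ∑ k, μ k • ntq (e k) ∧
      (∀ v ∈ BA A B, (QuotientAddGroup.mk (ntz v) : (Fin m → ℤ) ⧸ grp A) = g →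
        ∃ a ∈ A, ntz v - h = ntz a) ∧
      (∀ b ∈ B, (QuotientAddGroup.mk (ntz b) : (Fin m → ℤ) ⧸ grp A) = g →
        ∃ a ∈ A, ntz b - h = ntz a) := by
  subst hA
  obtain ⟨b₀, hb₀, hb₀g⟩ := hg
  obtain ⟨v₀, hv₀, a₀, ha₀, rfl⟩ := exists_mem_BA_add_mem hb₀
  rw [mk_ntz_add_of_mem v₀ ha₀] at hb₀g
  obtain ⟨p₀, hp₀⟩ := exists_nat_eq_lam_sub_of_isLeast hli hlam hmin hv₀ hb₀g
  have hh := cast_ntz_sub_ntz_sum_nsmul (hlam v₀ hv₀.1) hp₀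
  have hBA : ∀ v ∈ BA (AddSubmonoid.closure (Set.range e)) B,
      (QuotientAddGroup.mk (ntz v) : (Fin m → ℤ) ⧸ _) = g →
      ∃ a ∈ AddSubmonoid.closure (Set.range e),
        ntz v - (ntz v₀ - ntz (∑ k, p₀ k • e k)) = ntz a := by
    intro v hv hvg
    obtain ⟨p, hp⟩ := exists_nat_eq_lam_sub_of_isLeast hli hlam hmin hv hvg
    refine ⟨∑ k, p k • e k, AddSubmonoid.mem_closure_range_iff_of_fintype.mpr ⟨p, rfl⟩, ?_⟩
    rw [← intCast_comp_injective ((cast_ntz_sub_ntz_sum_nsmul (hlam v hv.1) hp).trans hh.symm),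
      sub_sub_cancel]
  refine ⟨_, sub_mem (ntz_mem_grp hv₀.1) (ntz_mem_grp (sum_mem fun k _ => nsmul_mem (he k) _)),
    hh, hBA, ?_⟩
  intro b hb hbg
  obtain ⟨x, hx, a, ha, rfl⟩ := exists_mem_BA_add_mem hb
  rw [mk_ntz_add_of_mem x ha] at hbg
  obtain ⟨a', ha', hxa'⟩ := hBA x hx hbg
  exact ⟨a' + a, add_mem ha' ha, by rw [ntz_add, ntz_add, ← hxa']; abel⟩

/-- Let `B ⊆ ℕ^m` be a positive affine semigroup such that `C(B)` is
generated by linearly independent `e₁,…,e_d ∈ B`, and let `A` be the submonoid of `B`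
generated by the `e_k`.  Let `g` be a coset of `G(A)` in `G(B)` with `B ∩ g ≠ ∅`, and
for `v ∈ B_A ∩ g` write `v = Σ_k λ_k^v e_k` with `λ_k^v ∈ ℚ`.  Then
`h := Σ_k (min{λ_k^v : v ∈ B_A ∩ g}) e_k` lies in `G(B)`, and `v − h ∈ A` for every
`v ∈ B_A ∩ g`; consequently `b − h ∈ A` for every `b ∈ B ∩ g`. -/
theorem stmt10 {m d : ℕ} (B : AddSubmonoid (Fin m → ℕ)) (hBfg : B.FG)
    (e : Fin d → Fin m → ℕ) (he : ∀ k, e k ∈ B)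
    (hli : LinearIndependent ℚ (fun k => ntq (e k)))
    (A : AddSubmonoid (Fin m → ℕ)) (hA : A = AddSubmonoid.closure (Set.range e))
    (hcone : cone B = cone A)
    (g : (Fin m → ℤ) ⧸ grp A)
    (hg : ∃ b ∈ B, (QuotientAddGroup.mk (ntz b) : (Fin m → ℤ) ⧸ grp A) = g)
    (lam : (Fin m → ℕ) → Fin d → ℚ)
    (hlam : ∀ v ∈ B, ntq v = ∑ k, lam v k • ntq (e k))
    (μ : Fin d → ℚ)
    (hmin : ∀ k, IsLeast {q : ℚ | ∃ v ∈ BA A B,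
      (QuotientAddGroup.mk (ntz v) : (Fin m → ℤ) ⧸ grp A) = g ∧ q = lam v k} (μ k)) :
    ∃ h : Fin m → ℤ, h ∈ grp B ∧
      (fun i => (h i : ℚ)) = ∑ k, μ k • ntq (e k) ∧
      (∀ v ∈ BA A B, (QuotientAddGroup.mk (ntz v) : (Fin m → ℤ) ⧸ grp A) = g →
        ∃ a ∈ A, ntz v - h = ntz a) ∧
      (∀ b ∈ B, (QuotientAddGroup.mk (ntz b) : (Fin m → ℤ) ⧸ grp A) = g →
        ∃ a ∈ A, ntz b - h = ntz a) :=
  stmt10_general B e he hli A hA g hg lam hlam μ hmin
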